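/- For any formula A of the bimodal language L₂, the following are equivalent: (1) GR• ⊢ A; (2) GR ⊢ A; (3) A is valid on all non-trivial GR°-frames; (4) A is valid on all ■-serial GR°-frames. In particular, GR• is an alternative axiomatization of GR, and GR has the finite frame property with respect to non-trivial GR°-frames. -/

import Mathlib

/-- Formulas of the bimodal language `L₂`: countably many propositional
variables, `⊥`, `¬`, `∨`, and two modal operators `□` (`box`) and `■` (`bb`). -/
inductive Formula : Type
  | var : ℕ → Formula
  | falsum : Formula
  | neg : Formula → Formula
  | or : Formula → Formula → Formula
  | box : Formula → Formula
  | bb : Formula → Formula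

namespace Formula

/-- `A → B` is defined as `¬A ∨ B`. -/
def imp (A B : Formula) : Formula := (A.neg).or B

/-- `A ∧ B` is defined as `¬(¬A ∨ ¬B)`. -/
def and (A B : Formula) : Formula := ((A.neg).or B.neg).neg

/-- `◇A` abbreviates `¬□¬A`. -/
def dia (A : Formula) : Formula := ((A.neg).box).neg

end Formula

/-- Propositional evaluation: variables and formulas of the form `□A`, `■A`
are treated as atoms whose truth value is given by `v`. -/
def evalProp (v : Formula → Bool) : Formula → Bool
  | .var n => v (.var n)
  | .falsum => false
  | .neg A => !(evalProp v A)
  | .or A B => evalProp v A || evalProp v B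
  | .box A => v (.box A)
  | .bb A => v (.bb A)

/-- Propositional tautologies of the bimodal language `L₂`. -/
def Taut (A : Formula) : Prop := ∀ v : Formula → Bool, evalProp v A = true

/-- The logic GR. -/
inductive GR : Formula → Prop
  | taut {A : Formula} : Taut A → GR A
  | k {A B : Formula} : GR (((A.imp B).box).imp ((A.box).imp (B.box)))
  | loeb {A : Formula} : GR ((((A.box).imp A).box).imp (A.box))
  | bbBox {A : Formula} : GR ((A.bb).imp (A.box))
  | boxBb {A : Formula} : GR ((A.box).imp ((A.bb).box))
  | ros {A : Formula} : GR ((A.box).imp ((Formula.falsum.box).or (A.bb)))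
  | diaBb {A : Formula} : GR (((A.bb).dia).imp (A.dia))
  | mp {A B : Formula} : GR (A.imp B) → GR A → GR B
  | nec {A : Formula} : GR A → GR (A.box)
  | boxElim {A : Formula} : GR (A.box) → GR A

/-- The logic GRbullet. -/
inductive GRbullet : Formula → Prop
  | taut {A : Formula} : Taut A → GRbullet A
  | k {A B : Formula} : GRbullet (((A.imp B).box).imp ((A.box).imp (B.box)))
  | loeb {A : Formula} : GRbullet ((((A.box).imp A).box).imp (A.box))
  | bbBox {A : Formula} : GRbullet ((A.bb).imp (A.box))
  | boxBb {A : Formula} : GRbullet ((A.box).imp ((A.bb).box))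
  | ros {A : Formula} : GRbullet ((A.box).imp ((Formula.falsum.box).or (A.bb)))
  | diaBb {A : Formula} : GRbullet (((A.bb).dia).imp (A.dia))
  | mp {A B : Formula} : GRbullet (A.imp B) → GRbullet A → GRbullet B
  | nec {A : Formula} : GRbullet A → GRbullet (A.box)
  | bbnec {A : Formula} : GRbullet A → GRbullet (A.bb)
  | rosser {A : Formula} : GRbullet (A.neg) → GRbullet ((A.bb).neg)

/-- A `GR°`-frame: a nonempty set of worlds `W`, a transitive conversely
well-founded relation `⊏` (`lt`), and for each formula `B` a relation
`≺_B` (`prec B`) satisfying the four frame conditions. -/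
structure GRFrame where
  W : Type
  nonempty : Nonempty W
  lt : W → W → Prop
  lt_trans : ∀ {x y z : W}, lt x y → lt y z → lt x z
  /-- `⊏` is conversely well-founded. -/
  cwf : WellFounded (fun x y : W => lt y x)
  prec : Formula → W → W → Prop
  lt_to_prec : ∀ {B : Formula} {x y : W}, lt x y → prec B x y
  lt_prec_lt : ∀ {B : Formula} {x y z : W}, lt x y → prec B y z → lt x z
  prec_lt_lt : ∀ {B : Formula} {x y z : W}, prec B x y → lt x z → lt x y
  lt_succ : ∀ {B : Formula} {x y : W}, lt x y → ∃ z : W, prec B y z ∧ lt x z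

/-- A satisfaction relation on a `GR°`-frame. -/
structure GRSat (F : GRFrame) where
  frc : F.W → Formula → Prop
  frc_falsum : ∀ w : F.W, ¬ frc w Formula.falsum
  frc_neg : ∀ (w : F.W) (A : Formula), frc w A.neg ↔ ¬ frc w A
  frc_or : ∀ (w : F.W) (A B : Formula), frc w (A.or B) ↔ (frc w A ∨ frc w B)
  frc_box : ∀ (w : F.W) (B : Formula), frc w B.box ↔ ∀ x : F.W, F.lt w x → frc x B
  frc_bb : ∀ (w : F.W) (B : Formula), frc w B.bb ↔ ∀ x : F.W, F.prec B w x → frc x B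

/-- `A` is valid on the frame `F`: it holds at every world under every
satisfaction relation on `F`. -/
def ValidOn (F : GRFrame) (A : Formula) : Prop :=
  ∀ (S : GRSat F) (w : F.W), S.frc w A

/-- A frame is non-trivial iff it has a root `r` (w.r.t. `⊏`) and some world `w ≠ r`. -/
def GRFrame.NonTrivial (F : GRFrame) : Prop :=
  ∃ r w : F.W, (∀ x : F.W, x ≠ r → F.lt r x) ∧ r ≠ w

/-- A frame is `■`-serial iff every `≺_B` is serial. -/
def GRFrame.Serial (F : GRFrame) : Prop :=
  ∀ (B : Formula) (x : F.W), ∃ y : F.W, F.prec B x y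

/-!
Soundness is routine; the Rosser rule needs `■`-seriality, and every non-trivial frame is
`■`-serial by frame condition (iv).

For completeness of `GR•`, fix a finite adequate set `Φ ∋ A` and let nodes be the consistent
`Φ`-complete sets, related by the usual Löb canonical relation. Worlds are the `⊏`-chains of
nodes, so the model is a finite tree whose root is the empty chain. `≺_B` agrees with `⊏`
except at dead ends (nodes containing `□⊥`), where it steps to a sibling. Above a predecessor
the sibling witnesses come from `◇■B → ◇B` and `□B → □■B`, and at the first level from the
Rosser rule and `■`-necessitation. A non-theorem `A` then fails at a child of the root, so `□A`
fails at the root. This also shows that the theorems of `GR•` are closed under `□`-elimination,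
hence `GR• = GR`.
-/

open Formula Classical

namespace GRFrame

variable (F : GRFrame)

def Forces (v : F.W → ℕ → Prop) : F.W → Formula → Prop
  | w, .var n => v w n
  | _, .falsum => False
  | w, .neg A => ¬ Forces v w A
  | w, .or A B => Forces v w A ∨ Forces v w B
  | w, .box A => ∀ x, F.lt w x → Forces v x A
  | w, .bb A => ∀ x, F.prec A w x → Forces v x A

def satOf (v : F.W → ℕ → Prop) : GRSat F where
  frc := F.Forces v
  frc_falsum _ h := h
  frc_neg _ _ := Iff.rfl
  frc_or _ _ _ := Iff.rfl
  frc_box _ _ := Iff.rfl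
  frc_bb _ _ := Iff.rfl

variable {F}

theorem NonTrivial.serial (hF : F.NonTrivial) : F.Serial := by
  obtain ⟨r, w, hroot, hrw⟩ := hF
  intro B x
  by_cases hx : x = r
  · subst hx
    exact ⟨w, F.lt_to_prec (hroot w (Ne.symm hrw))⟩
  · obtain ⟨z, hz, -⟩ := F.lt_succ (B := B) (hroot x hx)
    exact ⟨z, hz⟩

end GRFrame

theorem ValidOn.box {F : GRFrame} {A : Formula} (h : ValidOn F A) : ValidOn F A.box :=
  fun S w => (S.frc_box w A).2 fun x _ => h S x

namespace GRSat

variable {F : GRFrame} (S : GRSat F)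

theorem frc_imp (w : F.W) (A B : Formula) : S.frc w (A.imp B) ↔ (S.frc w A → S.frc w B) := by
  rw [Formula.imp, S.frc_or, S.frc_neg, imp_iff_not_or]

theorem frc_dia (w : F.W) (A : Formula) : S.frc w A.dia ↔ ∃ x, F.lt w x ∧ S.frc x A := by
  simp only [Formula.dia, S.frc_neg, S.frc_box, not_forall, not_not, exists_prop]

theorem frc_of_taut {A : Formula} (h : Taut A) (w : F.W) : S.frc w A := by
  have key : ∀ C, evalProp (fun C => decide (S.frc w C)) C = true ↔ S.frc w C := by
    intro C
    induction C with
    | falsum => simpa [evalProp] using S.frc_falsum w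
    | neg C ih => simp only [evalProp, Bool.not_eq_true', ← Bool.not_eq_true, ih, S.frc_neg]
    | or C D ihC ihD => simp only [evalProp, Bool.or_eq_true, ihC, ihD, S.frc_or]
    | _ => simp [evalProp]
  exact (key A).1 (h _)

theorem frc_loeb (w : F.W) (A : Formula) : S.frc w ((A.box.imp A).box.imp A.box) := by
  rw [frc_imp, S.frc_box, S.frc_box]
  intro h x hx
  induction x using F.cwf.induction with
  | _ x ih =>
    exact (S.frc_imp x _ _).1 (h x hx) ((S.frc_box x A).2 fun y hy => ih y hy (F.lt_trans hx hy))

theorem frc_ros (w : F.W) (A : Formula) : S.frc w (A.box.imp (falsum.box.or A.bb)) := by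
  rw [frc_imp, S.frc_or, S.frc_box, S.frc_box, S.frc_bb, or_iff_not_imp_left]
  intro h hnot
  simp only [not_forall] at hnot
  obtain ⟨z, hz, -⟩ := hnot
  exact fun y hy => h y (F.prec_lt_lt hy hz)

theorem frc_diaBb (w : F.W) (A : Formula) : S.frc w (A.bb.dia.imp A.dia) := by
  rw [frc_imp, frc_dia, frc_dia]
  rintro ⟨x, hx, hbb⟩
  obtain ⟨z, hxz, hwz⟩ := F.lt_succ (B := A) hx
  exact ⟨z, hwz, (S.frc_bb x A).1 hbb z hxz⟩

end GRSat

namespace GRbullet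

variable {A B C : Formula}

theorem validOn (h : GRbullet A) {F : GRFrame} (hF : F.Serial) : ValidOn F A := by
  induction h with
  | taut h => exact fun S => S.frc_of_taut h
  | k =>
    intro S w
    simp only [GRSat.frc_imp, S.frc_box]
    exact fun h₁ h₂ x hx => h₁ x hx (h₂ x hx)
  | loeb => exact fun S w => S.frc_loeb w _
  | bbBox =>
    intro S w
    rw [S.frc_imp, S.frc_bb, S.frc_box]
    exact fun h x hx => h x (F.lt_to_prec hx)
  | boxBb =>
    intro S w
    rw [S.frc_imp, S.frc_box, S.frc_box]
    exact fun h x hx => (S.frc_bb x _).2 fun y hy => h y (F.lt_prec_lt hx hy)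
  | ros => exact fun S w => S.frc_ros w _
  | diaBb => exact fun S w => S.frc_diaBb w _
  | mp _ _ ih₁ ih₂ => exact fun S w => (S.frc_imp w _ _).1 (ih₁ S w) (ih₂ S w)
  | nec _ ih => exact ih.box
  | bbnec _ ih => exact fun S w => (S.frc_bb w _).2 fun x _ => ih S x
  | @rosser A _ ih =>
    intro S w
    obtain ⟨y, hy⟩ := hF A w
    rw [S.frc_neg, S.frc_bb]
    exact fun hall => (S.frc_neg y A).1 (ih S y) (hall y hy)

theorem toGR (h : GRbullet A) : GR A := by
  induction h with
  | taut h => exact .taut h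
  | k => exact .k
  | loeb => exact .loeb
  | bbBox => exact .bbBox
  | boxBb => exact .boxBb
  | ros => exact .ros
  | diaBb => exact .diaBb
  | mp _ _ ih₁ ih₂ => exact ih₁.mp ih₂
  | nec _ ih => exact ih.nec
  | bbnec _ ih => exact .boxElim (GR.boxBb.mp ih.nec)
  | @rosser A _ ih =>
    have contra : GR ((A.bb.dia.imp A.dia).imp (A.neg.box.imp A.bb.neg.box)) :=
      .taut (by intro v; simp only [evalProp, imp, dia]; grind)
    exact .boxElim ((contra.mp .diaBb).mp ih.nec)

theorem imp_trans (h₁ : GRbullet (A.imp B)) (h₂ : GRbullet (B.imp C)) : GRbullet (A.imp C) :=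
  ((taut (by intro v; simp only [evalProp, imp]; grind) :
    GRbullet ((A.imp B).imp ((B.imp C).imp (A.imp C)))).mp h₁).mp h₂

theorem box_mono (h : GRbullet (A.imp B)) : GRbullet (A.box.imp B.box) := k.mp h.nec

/-- Löb's axiom for `A ∧ □A`. -/
theorem box_imp_box_box (A : Formula) : GRbullet (A.box.imp A.box.box) := by
  have hand : GRbullet ((A.and A.box).box.imp A.box) :=
    box_mono (taut (by intro v; simp only [evalProp, imp, Formula.and]; grind))
  have hstep : GRbullet (A.imp ((A.and A.box).box.imp (A.and A.box))) :=
    (taut (by intro v; simp only [evalProp, imp, Formula.and]; grind) :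
      GRbullet (((A.and A.box).box.imp A.box).imp
        (A.imp ((A.and A.box).box.imp (A.and A.box))))).mp hand
  exact imp_trans (imp_trans (box_mono hstep) loeb)
    (box_mono (taut (by intro v; simp only [evalProp, imp, Formula.and]; grind)))

end GRbullet

def Formula.conjList : List Formula → Formula
  | [] => falsum.neg
  | C :: Γ => C.and (conjList Γ)

def Derives (Γ : List Formula) (C : Formula) : Prop := GRbullet ((conjList Γ).imp C)

def Consistent (Γ : List Formula) : Prop := ¬ Derives Γ falsum

namespace Derives

variable {Γ Δ L : List Formula} {C D χ : Formula}

theorem of_grbullet (h : GRbullet C) : Derives Γ C :=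
  (GRbullet.taut (by intro v; simp only [evalProp, imp]; grind) :
    GRbullet (C.imp ((conjList Γ).imp C))).mp h

theorem mp (h₁ : Derives Γ (C.imp D)) (h₂ : Derives Γ C) : Derives Γ D :=
  ((GRbullet.taut (by intro v; simp only [evalProp, imp]; grind) :
    GRbullet (((conjList Γ).imp (C.imp D)).imp
      (((conjList Γ).imp C).imp ((conjList Γ).imp D)))).mp h₁).mp h₂

theorem mt (h₁ : GRbullet (C.imp D)) (h₂ : Derives Γ D.neg) : Derives Γ C.neg :=
  mp (of_grbullet ((GRbullet.taut (by intro v; simp only [evalProp, imp]; grind) :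
    GRbullet ((C.imp D).imp (D.neg.imp C.neg))).mp h₁)) h₂

theorem of_mem (h : C ∈ Γ) : Derives Γ C := by
  induction Γ with
  | nil => cases h
  | cons D Γ ih =>
    rcases List.mem_cons.1 h with rfl | h
    · exact .taut (by intro v; simp only [Formula.conjList, evalProp, imp, Formula.and]; grind)
    · refine GRbullet.imp_trans (.taut ?_) (ih h)
      intro v; simp only [Formula.conjList, evalProp, imp, Formula.and]; grind

theorem conjList_of_forall (h : ∀ D ∈ Δ, Derives Γ D) : Derives Γ (conjList Δ) := by
  induction Δ with
  | nil => exact of_grbullet (.taut (by intro v; rfl))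
  | cons D Δ ih =>
    rw [List.forall_mem_cons] at h
    have hand : GRbullet (D.imp ((conjList Δ).imp (conjList (D :: Δ)))) :=
      .taut (by intro v; simp only [Formula.conjList, evalProp, imp, Formula.and]; grind)
    exact mp (mp (of_grbullet hand) h.1) (ih h.2)

theorem cut (hΔ : ∀ D ∈ Δ, Derives Γ D) (h : Derives Δ C) : Derives Γ C :=
  GRbullet.imp_trans (conjList_of_forall hΔ) h

theorem mono (hsub : Γ ⊆ Δ) (h : Derives Γ C) : Derives Δ C :=
  cut (fun _ hD => of_mem (hsub hD)) h

theorem imp_intro (h : Derives (C :: Γ) D) : Derives Γ (C.imp D) :=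
  (GRbullet.taut (by intro v; simp only [Formula.conjList, evalProp, imp, Formula.and]; grind) :
    GRbullet (((conjList (C :: Γ)).imp D).imp ((conjList Γ).imp (C.imp D)))).mp h

theorem box_and (h₁ : Derives Γ C.box) (h₂ : Derives Γ D.box) : Derives Γ (C.and D).box :=
  mp (mp (of_grbullet .k) (mp (of_grbullet (GRbullet.box_mono (.taut (by
    intro v; simp only [evalProp, imp, Formula.and]; grind) :
      GRbullet (C.imp (D.imp (C.and D)))))) h₁)) h₂

theorem map_box_conjList (Γ : List Formula) : Derives (Γ.map box) (conjList Γ).box := by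
  induction Γ with
  | nil => exact of_grbullet (.nec (.taut (by intro v; rfl)))
  | cons E Γ ih =>
    exact box_and (of_mem List.mem_cons_self) (mono (List.subset_cons_self _ _) ih)

theorem box (h : Derives Γ C) : Derives (Γ.map Formula.box) C.box :=
  mp (of_grbullet (GRbullet.box_mono h)) (map_box_conjList Γ)

theorem loeb (h : Derives (L.flatMap fun E => [E.box, E]) (χ.box.imp χ)) :
    Derives (L.map Formula.box) χ.box := by
  refine mp (of_grbullet .loeb) (cut (fun D hD => ?_) h.box)
  simp only [List.mem_map, List.mem_flatMap, List.mem_cons, List.not_mem_nil, or_false] at hD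
  obtain ⟨_, ⟨E, hE, rfl | rfl⟩, rfl⟩ := hD
  · exact mp (of_grbullet (GRbullet.box_imp_box_box E)) (of_mem (List.mem_map_of_mem hE))
  · exact of_mem (List.mem_map_of_mem hE)

end Derives

namespace Consistent

variable {Γ Δ : List Formula} {C : Formula}

theorem mono (hsub : Γ ⊆ Δ) (h : Consistent Δ) : Consistent Γ := fun hΓ => h (hΓ.mono hsub)

theorem not_derives_neg (h : Consistent Γ) (hC : Derives Γ C) : ¬ Derives Γ C.neg :=
  fun hn => h (Derives.mp (Derives.mp (Derives.of_grbullet (.taut (by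
    intro v; simp only [evalProp, imp]; grind) : GRbullet (C.imp (C.neg.imp falsum)))) hC) hn)

theorem not_derives_neg_of_mem (h : Consistent (Γ ++ Δ)) (hC : C ∈ Γ) : ¬ Derives Δ C.neg :=
  fun hn => h.not_derives_neg (Derives.of_mem (List.mem_append_left _ hC))
    (hn.mono (List.subset_append_right _ _))

theorem not_derives_of_neg_mem (h : Consistent (Γ ++ Δ)) (hC : C.neg ∈ Γ) : ¬ Derives Δ C :=
  fun hn => h.not_derives_neg (hn.mono (List.subset_append_right _ _))
    (Derives.of_mem (List.mem_append_left _ hC))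

theorem cons_or_cons_neg (h : Consistent Γ) (C : Formula) :
    Consistent (C :: Γ) ∨ Consistent (C.neg :: Γ) := by
  by_contra! hboth
  obtain ⟨h₁, h₂⟩ := hboth
  exact h (Derives.mp (Derives.mp (Derives.of_grbullet (.taut (by
    intro v; simp only [evalProp, imp]; grind) :
      GRbullet ((C.imp falsum).imp ((C.neg.imp falsum).imp falsum))))
    (not_not.1 h₁).imp_intro) (not_not.1 h₂).imp_intro)

theorem exists_decide (h : Consistent Γ) (L : List Formula) :
    ∃ Γ', Consistent Γ' ∧ Γ ⊆ Γ' ∧ ∀ C ∈ L, C ∈ Γ' ∨ C.neg ∈ Γ' := by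
  induction L with
  | nil => exact ⟨Γ, h, List.Subset.refl _, by simp⟩
  | cons C L ih =>
    obtain ⟨Γ', hΓ', hsub, hdec⟩ := ih
    have hdec' (D : Formula) (hD : D ∈ L) (E : Formula) :
        D ∈ E :: Γ' ∨ D.neg ∈ E :: Γ' :=
      (hdec D hD).imp (List.mem_cons_of_mem _) (List.mem_cons_of_mem _)
    rcases hΓ'.cons_or_cons_neg C with hC | hC
    · exact ⟨_, hC, List.Subset.trans hsub (List.subset_cons_self _ _),
        List.forall_mem_cons.2 ⟨.inl List.mem_cons_self, fun D hD => hdec' D hD _⟩⟩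
    · exact ⟨_, hC, List.Subset.trans hsub (List.subset_cons_self _ _),
        List.forall_mem_cons.2 ⟨.inr List.mem_cons_self, fun D hD => hdec' D hD _⟩⟩

theorem singleton_neg (h : ¬ GRbullet C) : Consistent [C.neg] := fun hC =>
  h (GRbullet.mp (.taut (by
    intro v; simp only [Formula.conjList, evalProp, imp, Formula.and]; grind)) hC)

end Consistent

namespace Formula

/-- Besides subformulas, each `■B` contributes `□B, □¬B, □■B, □¬■B`: the formulas consulted when
the canonical model builds `≺_B`-witnesses. -/
noncomputable def closure : Formula → Finset Formula
  | var n => {var n}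
  | falsum => {falsum}
  | neg A => insert A.neg A.closure
  | or A B => insert (A.or B) (A.closure ∪ B.closure)
  | box A => insert A.box A.closure
  | bb A => {A.bb, A.bb.neg, A.bb.box, A.bb.neg.box, A.box, A.neg, A.neg.box} ∪ A.closure

theorem mem_closure_self (A : Formula) : A ∈ A.closure := by
  cases A <;> simp [Formula.closure]

theorem closure_subset_of_mem {A B : Formula} (h : A ∈ B.closure) : A.closure ⊆ B.closure := by
  induction B with
  | var n => simp_all [closure]
  | falsum => simp_all [closure]
  | neg B ih =>
    rcases Finset.mem_insert.1 h with rfl | h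
    · rfl
    · exact (ih h).trans (Finset.subset_insert _ _)
  | or B C ihB ihC =>
    simp only [closure, Finset.mem_insert, Finset.mem_union] at h
    rcases h with rfl | h | h
    · rfl
    · exact (ihB h).trans (Finset.subset_union_left.trans (Finset.subset_insert _ _))
    · exact (ihC h).trans (Finset.subset_union_right.trans (Finset.subset_insert _ _))
  | box B ih =>
    rcases Finset.mem_insert.1 h with rfl | h
    · rfl
    · exact (ih h).trans (Finset.subset_insert _ _)
  | bb B ih =>
    simp only [closure, Finset.mem_insert, Finset.mem_union, Finset.mem_singleton] at h
    rcases h with (rfl | rfl | rfl | rfl | rfl | rfl | rfl) | h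
    all_goals first
      | exact (ih h).trans Finset.subset_union_right
      | intro x hx
        simp only [closure, Finset.mem_insert, Finset.mem_union, Finset.mem_singleton] at hx ⊢
        tauto

end Formula

structure AdequateSet where
  carrier : Finset Formula
  of_neg_mem {C : Formula} : C.neg ∈ carrier → C ∈ carrier
  of_or_mem {C D : Formula} : C.or D ∈ carrier → C ∈ carrier ∧ D ∈ carrier
  of_box_mem {C : Formula} : C.box ∈ carrier → C ∈ carrier
  of_bb_mem {C : Formula} : C.bb ∈ carrier →
    C.box ∈ carrier ∧ C.neg.box ∈ carrier ∧ C.bb.box ∈ carrier ∧ C.bb.neg.box ∈ carrier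
  falsum_box_mem : falsum.box ∈ carrier

namespace AdequateSet

noncomputable def ofFormula (A : Formula) : AdequateSet :=
  have mem {B C : Formula} (hB : B ∈ A.closure ∪ falsum.box.closure) (hC : C ∈ B.closure) :
      C ∈ A.closure ∪ falsum.box.closure := by
    rw [Finset.mem_union] at hB ⊢
    exact hB.imp (closure_subset_of_mem · hC) (closure_subset_of_mem · hC)
  { carrier := A.closure ∪ falsum.box.closure
    of_neg_mem := fun h => mem h (by simp [Formula.closure, mem_closure_self])
    of_or_mem := fun h => ⟨mem h (by simp [Formula.closure, mem_closure_self]),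
      mem h (by simp [Formula.closure, mem_closure_self])⟩
    of_box_mem := fun h => mem h (by simp [Formula.closure, mem_closure_self])
    of_bb_mem := fun h => ⟨mem h (by simp [Formula.closure]), mem h (by simp [Formula.closure]),
      mem h (by simp [Formula.closure]), mem h (by simp [Formula.closure])⟩
    falsum_box_mem := Finset.mem_union_right _ (mem_closure_self _) }

theorem mem_ofFormula (A : Formula) : A ∈ (ofFormula A).carrier :=
  Finset.mem_union_left _ (mem_closure_self A)

variable (Φ : AdequateSet)

theorem mem_of_bb_mem {C : Formula} (h : C.bb ∈ Φ.carrier) : C ∈ Φ.carrier :=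
  Φ.of_box_mem (Φ.of_bb_mem h).1

noncomputable def theory (s : Finset Formula) : List Formula :=
  s.toList ++ (Φ.carrier \ s).toList.map neg

end AdequateSet

@[ext]
structure Node (Φ : AdequateSet) where
  set : Finset Formula
  subset : set ⊆ Φ.carrier
  consistent : Consistent (Φ.theory set)

namespace Node

variable {Φ : AdequateSet} {X Y W : Node Φ} {C D χ : Formula} {Γ : List Formula}

noncomputable abbrev theory (X : Node Φ) : List Formula := Φ.theory X.set

instance : Finite (Node Φ) :=
  Finite.of_injective (fun X : Node Φ => (⟨X.set, Finset.mem_powerset.2 X.subset⟩ :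
    Φ.carrier.powerset)) fun _ _ h => Node.ext (congrArg Subtype.val h)

theorem derives_of_mem (h : C ∈ X.set) : Derives X.theory C :=
  .of_mem (List.mem_append_left _ (Finset.mem_toList.2 h))

theorem derives_neg_of_not_mem (hC : C ∈ Φ.carrier) (h : C ∉ X.set) : Derives X.theory C.neg :=
  .of_mem (List.mem_append_right _ (List.mem_map_of_mem (Finset.mem_toList.2
    (Finset.mem_sdiff.2 ⟨hC, h⟩))))

theorem mem_iff_derives (hC : C ∈ Φ.carrier) : C ∈ X.set ↔ Derives X.theory C :=
  ⟨derives_of_mem, fun h => by_contra fun hn =>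
    X.consistent.not_derives_neg h (derives_neg_of_not_mem hC hn)⟩

theorem mem_of_not_derives_neg (hC : C ∈ Φ.carrier) (h : ¬ Derives X.theory C.neg) :
    C ∈ X.set :=
  by_contra fun hn => h (derives_neg_of_not_mem hC hn)

theorem falsum_not_mem : falsum ∉ X.set := fun h => X.consistent (derives_of_mem h)

theorem neg_mem_iff (hC : C.neg ∈ Φ.carrier) : C.neg ∈ X.set ↔ C ∉ X.set :=
  ⟨fun hn h => X.consistent.not_derives_neg (derives_of_mem h) (derives_of_mem hn),
    fun h => (mem_iff_derives hC).2 (derives_neg_of_not_mem (Φ.of_neg_mem hC) h)⟩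

theorem or_mem_iff (hCD : (C.or D) ∈ Φ.carrier) : C.or D ∈ X.set ↔ C ∈ X.set ∨ D ∈ X.set := by
  obtain ⟨hC, hD⟩ := Φ.of_or_mem hCD
  rw [mem_iff_derives hCD]
  constructor
  · intro h
    by_contra! hn
    refine X.consistent (Derives.mp (Derives.mp (Derives.mp (Derives.of_grbullet (.taut (by
      intro v; simp only [evalProp, imp]; grind) :
        GRbullet ((C.or D).imp (C.neg.imp (D.neg.imp falsum))))) h) ?_) ?_)
    exacts [derives_neg_of_not_mem hC hn.1, derives_neg_of_not_mem hD hn.2]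
  · rintro (h | h) <;> refine Derives.mp (Derives.of_grbullet (.taut ?_)) (derives_of_mem h) <;>
      intro v <;> simp only [evalProp, imp] <;> grind

theorem exists_consistent_append (h : Consistent Γ) :
    ∃ Y : Node Φ, Consistent (Γ ++ Y.theory) := by
  obtain ⟨Γ', hΓ', hsub, hdec⟩ := h.exists_decide Φ.carrier.toList
  have hsub' : Γ ++ Φ.theory (Φ.carrier.filter (· ∈ Γ')) ⊆ Γ' := by
    intro x hx
    simp only [AdequateSet.theory, List.mem_append, Finset.mem_toList, Finset.mem_filter,
      List.mem_map, Finset.mem_sdiff] at hx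
    rcases hx with hx | ⟨-, hx⟩ | ⟨C, ⟨hC, hCΓ'⟩, rfl⟩
    · exact hsub hx
    · exact hx
    · exact (hdec C (Finset.mem_toList.2 hC)).resolve_left fun h => hCΓ' ⟨hC, h⟩
  exact ⟨⟨_, Finset.filter_subset _ _, (hΓ'.mono hsub').mono (List.subset_append_right _ _)⟩,
    hΓ'.mono hsub'⟩

theorem exists_not_derives (h : ¬ GRbullet C) : ∃ Y : Node Φ, ¬ Derives Y.theory C := by
  obtain ⟨Y, hY⟩ := exists_consistent_append (Consistent.singleton_neg h)
  exact ⟨Y, hY.not_derives_of_neg_mem List.mem_cons_self⟩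

def Lt (X Y : Node Φ) : Prop :=
  (∀ E : Formula, E.box ∈ X.set → E.box ∈ Y.set ∧ E ∈ Y.set) ∧
    ∃ E : Formula, E.box ∈ Y.set ∧ E.box ∉ X.set

theorem Lt.trans (h₁ : X.Lt Y) (h₂ : Y.Lt W) : X.Lt W :=
  ⟨fun E hE => h₂.1 E (h₁.1 E hE).1, h₁.2.imp fun E hE => ⟨(h₂.1 E hE.1).1, hE.2⟩⟩

theorem Lt.irrefl (X : Node Φ) : ¬ X.Lt X := fun ⟨_, _, hE, hE'⟩ => hE' hE

def IsDeadEnd (X : Node Φ) : Prop := falsum.box ∈ X.set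

theorem IsDeadEnd.not_lt (hX : X.IsDeadEnd) : ¬ X.Lt Y := fun h => falsum_not_mem (h.1 _ hX).2

/-- If `{E, □E | □E ∈ X} ∪ {□χ, ¬χ}` were inconsistent, Löb's axiom would give `X ⊢ □χ`. -/
theorem exists_lt_not_derives (hχ : χ.box ∈ Φ.carrier) (h : Derives X.theory χ.box.neg) :
    ∃ Y, X.Lt Y ∧ ¬ Derives Y.theory χ := by
  let L := (Φ.carrier.filter fun E => E.box ∈ X.set).toList
  have hL {E : Formula} : E ∈ L ↔ E.box ∈ X.set := by
    simp only [L, Finset.mem_toList, Finset.mem_filter, and_iff_right_iff_imp]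
    exact fun hE => Φ.of_box_mem (X.subset hE)
  let Γ := χ.neg :: χ.box :: L.flatMap fun E => [E.box, E]
  have hΓ : Consistent Γ := by
    intro hinc
    have hloeb : Derives (L.flatMap fun E => [E.box, E]) (χ.box.imp χ) :=
      Derives.mp (.of_grbullet (.taut (by intro v; simp only [evalProp, imp]; grind) :
        GRbullet ((χ.box.imp (χ.neg.imp falsum)).imp (χ.box.imp χ)))) hinc.imp_intro.imp_intro
    refine X.consistent.not_derives_neg ((Derives.loeb hloeb).mono fun D hD => ?_) h
    obtain ⟨E, hE, rfl⟩ := List.mem_map.1 hD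
    exact List.mem_append_left _ (Finset.mem_toList.2 (hL.1 hE))
  obtain ⟨Y, hY⟩ := exists_consistent_append (Φ := Φ) hΓ
  have hmem {D : Formula} (hD : D ∈ Γ) (hDΦ : D ∈ Φ.carrier) : D ∈ Y.set :=
    mem_of_not_derives_neg hDΦ (hY.not_derives_neg_of_mem hD)
  have hΓ {E D : Formula} (hE : E.box ∈ X.set) (hD : D ∈ [E.box, E]) : D ∈ Γ :=
    List.mem_cons_of_mem _ (List.mem_cons_of_mem _ (List.mem_flatMap.2 ⟨E, hL.2 hE, hD⟩))
  refine ⟨Y, ⟨fun E hE => ⟨hmem (hΓ hE (by simp)) (X.subset hE),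
    hmem (hΓ hE (by simp)) (Φ.of_box_mem (X.subset hE))⟩, χ, hmem (by simp [Γ]) hχ,
    fun hX => X.consistent.not_derives_neg (derives_of_mem hX) h⟩,
    hY.not_derives_of_neg_mem List.mem_cons_self⟩

theorem exists_lt_not_mem (hC : C.box ∈ Φ.carrier) (h : C.box ∉ X.set) :
    ∃ Y, X.Lt Y ∧ C ∉ Y.set :=
  (exists_lt_not_derives hC (derives_neg_of_not_mem hC h)).imp fun _ hY =>
    ⟨hY.1, mt derives_of_mem hY.2⟩

theorem exists_lt_of_not_isDeadEnd (h : ¬ X.IsDeadEnd) : ∃ Y, X.Lt Y :=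
  (exists_lt_not_mem Φ.falsum_box_mem h).imp fun _ hY => hY.1

theorem box_mem_of_bb_mem (hC : C.bb ∈ Φ.carrier) (h : C.bb ∈ X.set) : C.box ∈ X.set :=
  (mem_iff_derives (Φ.of_bb_mem hC).1).2 (Derives.mp (.of_grbullet .bbBox) (derives_of_mem h))

theorem bb_mem_of_box_mem (hC : C.bb ∈ Φ.carrier) (hX : ¬ X.IsDeadEnd) (h : C.box ∈ X.set) :
    C.bb ∈ X.set := by
  rw [mem_iff_derives hC]
  have hcases : GRbullet ((falsum.box.or C.bb).imp (falsum.box.neg.imp C.bb)) :=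
    .taut (by intro v; simp only [evalProp, imp]; grind)
  exact Derives.mp (Derives.mp (.of_grbullet hcases) (Derives.mp (.of_grbullet .ros)
    (derives_of_mem h))) (derives_neg_of_not_mem Φ.falsum_box_mem hX)

/-- The `≺_B`-witnesses at a dead end `X` must be siblings of `X`, i.e. lie above the predecessor
`o` of `X` if there is one. -/
theorem exists_bb_witness_mem {o : Option (Node Φ)} (hC : C.bb ∈ Φ.carrier) (hX : C.bb ∈ X.set)
    (ho : ∀ W ∈ o, W.Lt X) : ∃ Y, (∀ W ∈ o, W.Lt Y) ∧ C ∈ Y.set := by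
  cases o with
  | none =>
    have hC' : ¬ GRbullet C.neg := fun h =>
      X.consistent.not_derives_neg (derives_of_mem hX) (.of_grbullet h.rosser)
    obtain ⟨Y, hY⟩ := exists_not_derives (Φ := Φ) hC'
    exact ⟨Y, by simp, mem_of_not_derives_neg (Φ.mem_of_bb_mem hC) hY⟩
  | some W =>
    obtain ⟨-, hnegbox, -, hbbnegbox⟩ := Φ.of_bb_mem hC
    have hW : C.bb.neg.box ∉ W.set := fun h => X.consistent.not_derives_neg (derives_of_mem hX)
      (derives_of_mem ((ho W rfl).1 _ h).2)
    have hdia : Derives W.theory C.neg.box.neg :=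
      Derives.mp (.of_grbullet .diaBb) (derives_neg_of_not_mem hbbnegbox hW)
    obtain ⟨Y, hWY, hY⟩ := exists_lt_not_derives hnegbox hdia
    exact ⟨Y, by simpa using hWY, mem_of_not_derives_neg (Φ.mem_of_bb_mem hC) hY⟩

theorem exists_bb_witness_not_mem {o : Option (Node Φ)} (hC : C.bb ∈ Φ.carrier)
    (hX : C.bb ∉ X.set) (ho : ∀ W ∈ o, W.Lt X) : ∃ Y, (∀ W ∈ o, W.Lt Y) ∧ C ∉ Y.set := by
  cases o with
  | none =>
    have hC' : ¬ GRbullet C := fun h => hX ((mem_iff_derives hC).2 (.of_grbullet h.bbnec))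
    obtain ⟨Y, hY⟩ := exists_not_derives (Φ := Φ) hC'
    exact ⟨Y, by simp, mt derives_of_mem hY⟩
  | some W =>
    obtain ⟨hbox, -, hbbbox, -⟩ := Φ.of_bb_mem hC
    have hW : C.bb.box ∉ W.set := fun h => hX ((ho W rfl).1 _ h).2
    have hnbox : Derives W.theory C.box.neg :=
      Derives.mt .boxBb (derives_neg_of_not_mem hbbbox hW)
    obtain ⟨Y, hWY, hY⟩ := exists_lt_not_derives hbox hnbox
    exact ⟨Y, by simpa using hWY, mt derives_of_mem hY⟩

end Node

/-- Chains are listed from the top down; the empty chain is the root. -/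
def World (Φ : AdequateSet) : Type := {l : List (Node Φ) // l.IsChain (flip Node.Lt)}

namespace World

variable {Φ : AdequateSet} {ρ σ τ : World Φ} {X Y : Node Φ} {rest : List (Node Φ)}
  {B : Formula}

instance : Trans (flip (@Node.Lt Φ)) (flip Node.Lt) (flip Node.Lt) := ⟨fun h₁ h₂ => h₂.trans h₁⟩

instance : Finite (World Φ) := by
  have := Fintype.ofFinite (Node Φ)
  refine Set.Finite.to_subtype ((List.finite_length_le _ (Fintype.card (Node Φ))).subset ?_)
  intro l (hl : l.IsChain _)
  refine List.Nodup.length_le_card (hl.pairwise.imp fun h e => ?_)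
  subst e
  exact Node.Lt.irrefl _ h

def Lt (σ τ : World Φ) : Prop := σ.1 <:+ τ.1 ∧ σ.1.length < τ.1.length

theorem Lt.trans (h₁ : ρ.Lt σ) (h₂ : σ.Lt τ) : ρ.Lt τ := ⟨h₁.1.trans h₂.1, h₁.2.trans h₂.2⟩

theorem Lt.irrefl (σ : World Φ) : ¬ σ.Lt σ := fun h => (lt_irrefl _ h.2)

theorem Lt.ne_nil (h : σ.Lt τ) : τ.1 ≠ [] := List.ne_nil_of_length_pos (Nat.zero_lt_of_lt h.2)

theorem Lt.suffix_of_eq_cons (h : ρ.Lt σ) (hσ : σ.1 = X :: rest) : ρ.1 <:+ rest := by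
  obtain ⟨hsuf, hlen⟩ := h
  rw [hσ] at hsuf hlen
  refine (List.suffix_cons_iff.1 hsuf).resolve_left fun e => ?_
  rw [e] at hlen
  exact lt_irrefl _ hlen

theorem lt_of_suffix (h : ρ.1 <:+ rest) (hτ : τ.1 = Y :: rest) : ρ.Lt τ := by
  rw [Lt, hτ]
  exact ⟨h.trans (List.suffix_cons _ _), Nat.lt_succ_of_le h.length_le⟩

theorem Lt.exists_head (h : σ.Lt τ) (hσ : σ.1 = X :: rest) :
    ∃ Z t, τ.1 = Z :: t ∧ X.Lt Z := by
  obtain ⟨Z, t, hτ⟩ := List.exists_cons_of_ne_nil h.ne_nil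
  have hX : X ∈ t := (h.suffix_of_eq_cons hτ).subset (hσ ▸ List.mem_cons_self)
  exact ⟨Z, t, hτ, (hτ ▸ τ.2).rel_cons hX⟩

theorem not_lt_of_isDeadEnd (hσ : σ.1 = X :: rest) (hX : X.IsDeadEnd) : ¬ σ.Lt τ := fun h =>
  let ⟨_, _, _, hXZ⟩ := h.exists_head hσ
  hX.not_lt hXZ

theorem pred_lt (hσ : σ.1 = X :: rest) : ∀ W ∈ rest.head?, W.Lt X :=
  (List.isChain_cons.1 (hσ ▸ σ.2)).1

def cons (σ : World Φ) (hσ : σ.1 = X :: rest) (hXY : X.Lt Y) : World Φ :=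
  ⟨Y :: σ.1, List.isChain_cons.2 ⟨by simpa [hσ, flip] using hXY, σ.2⟩⟩

theorem lt_cons (hσ : σ.1 = X :: rest) (hXY : X.Lt Y) : σ.Lt (σ.cons hσ hXY) :=
  ⟨List.suffix_cons _ _, Nat.lt_succ_self _⟩

theorem exists_sibling (hσ : σ.1 = X :: rest) (hY : ∀ W ∈ rest.head?, W.Lt Y) :
    ∃ τ : World Φ, τ.1 = Y :: rest :=
  ⟨⟨Y :: rest, List.isChain_cons.2 ⟨hY, (List.isChain_cons.1 (hσ ▸ σ.2)).2⟩⟩, rfl⟩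

/-- Siblings have the same predecessors, as frame condition (ii) demands of `≺_B`-successors of
a dead end. -/
def SiblingStep (B : Formula) (σ τ : World Φ) : Prop :=
  ∃ X Y rest, σ.1 = X :: rest ∧ τ.1 = Y :: rest ∧ X.IsDeadEnd ∧ (B.bb ∈ X.set → B ∈ Y.set)

def Prec (B : Formula) (σ τ : World Φ) : Prop := σ.Lt τ ∨ SiblingStep B σ τ

theorem lt_prec_lt (h₁ : ρ.Lt σ) (h₂ : σ.Prec B τ) : ρ.Lt τ := by
  rcases h₂ with h₂ | ⟨X, Y, rest, hσ, hτ, -, -⟩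
  · exact h₁.trans h₂
  · exact lt_of_suffix (h₁.suffix_of_eq_cons hσ) hτ

theorem prec_lt_lt (h₁ : σ.Prec B τ) (h₂ : σ.Lt ρ) : σ.Lt τ := by
  rcases h₁ with h₁ | ⟨X, Y, rest, hσ, -, hX, -⟩
  · exact h₁
  · exact absurd h₂ (not_lt_of_isDeadEnd hσ hX)

theorem exists_prec (B : Formula) (hσ : σ.1 = X :: rest) :
    ∃ τ, σ.Prec B τ ∧ ∀ ρ : World Φ, ρ.Lt σ → ρ.Lt τ := by
  by_cases hX : X.IsDeadEnd
  · obtain ⟨Y, hY, hBY⟩ : ∃ Y, (∀ W ∈ rest.head?, W.Lt Y) ∧ (B.bb ∈ X.set → B ∈ Y.set) := by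
      by_cases hB : B.bb ∈ X.set
      · obtain ⟨Y, hY, hBY⟩ := Node.exists_bb_witness_mem (X.subset hB) hB (pred_lt hσ)
        exact ⟨Y, hY, fun _ => hBY⟩
      · exact ⟨X, pred_lt hσ, fun h => absurd h hB⟩
    obtain ⟨τ, hτ⟩ := exists_sibling hσ hY
    exact ⟨τ, .inr ⟨X, Y, rest, hσ, hτ, hX, hBY⟩,
      fun ρ hρ => lt_of_suffix (hρ.suffix_of_eq_cons hσ) hτ⟩
  · obtain ⟨Y, hXY⟩ := Node.exists_lt_of_not_isDeadEnd hX
    exact ⟨σ.cons hσ hXY, .inl (lt_cons hσ hXY), fun ρ hρ => hρ.trans (lt_cons hσ hXY)⟩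

theorem Lt.mem_of_box_mem (h : σ.Lt τ) (hσ : σ.1 = X :: rest) (hX : B.box ∈ X.set) :
    ∃ Z t, τ.1 = Z :: t ∧ B ∈ Z.set :=
  let ⟨Z, t, hτ, hXZ⟩ := h.exists_head hσ
  ⟨Z, t, hτ, (hXZ.1 B hX).2⟩

theorem Prec.mem_of_bb_mem (h : σ.Prec B τ) (hσ : σ.1 = X :: rest) (hX : B.bb ∈ X.set) :
    ∃ Z t, τ.1 = Z :: t ∧ B ∈ Z.set := by
  rcases h with h | ⟨X', Y, rest', hσ', hτ, -, hY⟩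
  · exact h.mem_of_box_mem hσ (Node.box_mem_of_bb_mem (X.subset hX) hX)
  · obtain ⟨rfl, rfl⟩ := List.cons.inj (hσ'.symm.trans hσ)
    exact ⟨Y, rest', hτ, hY hX⟩

theorem exists_lt_not_mem (hσ : σ.1 = X :: rest) (hB : B.box ∈ Φ.carrier) (h : B.box ∉ X.set) :
    ∃ τ Y t, τ.1 = Y :: t ∧ σ.Lt τ ∧ B ∉ Y.set :=
  let ⟨Y, hXY, hY⟩ := Node.exists_lt_not_mem hB h
  ⟨σ.cons hσ hXY, Y, σ.1, rfl, lt_cons hσ hXY, hY⟩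

theorem exists_prec_not_mem (hσ : σ.1 = X :: rest) (hB : B.bb ∈ Φ.carrier) (h : B.bb ∉ X.set) :
    ∃ τ Y t, τ.1 = Y :: t ∧ σ.Prec B τ ∧ B ∉ Y.set := by
  by_cases hX : X.IsDeadEnd
  · obtain ⟨Y, hY, hBY⟩ := Node.exists_bb_witness_not_mem hB h (pred_lt hσ)
    obtain ⟨τ, hτ⟩ := exists_sibling hσ hY
    exact ⟨τ, Y, rest, hτ, .inr ⟨X, Y, rest, hσ, hτ, hX, fun h' => absurd h' h⟩, hBY⟩
  · obtain ⟨τ, Y, t, hτ, hστ, hY⟩ :=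
      exists_lt_not_mem hσ (Φ.of_bb_mem hB).1 (mt (Node.bb_mem_of_box_mem hB hX) h)
    exact ⟨τ, Y, t, hτ, .inl hστ, hY⟩

end World

noncomputable abbrev canonicalFrame (Φ : AdequateSet) : GRFrame where
  W := World Φ
  nonempty := ⟨⟨[], .nil⟩⟩
  lt := World.Lt
  lt_trans := World.Lt.trans
  cwf := @Finite.wellFounded_of_trans_of_irrefl _ _ _ ⟨fun _ _ _ h₁ h₂ => h₂.trans h₁⟩
    ⟨World.Lt.irrefl⟩
  prec := World.Prec
  lt_to_prec := .inl
  lt_prec_lt := World.lt_prec_lt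
  prec_lt_lt := World.prec_lt_lt
  lt_succ {B x y} h := by
    obtain ⟨X, rest, hy⟩ := List.exists_cons_of_ne_nil h.ne_nil
    obtain ⟨z, hyz, hz⟩ := World.exists_prec B hy
    exact ⟨z, hyz, hz x h⟩

noncomputable def canonicalSat (Φ : AdequateSet) : GRSat (canonicalFrame Φ) :=
  (canonicalFrame Φ).satOf fun σ n => ∃ X ∈ σ.1.head?, var n ∈ X.set

theorem canonicalSat_frc_iff {Φ : AdequateSet} {C : Formula} (hC : C ∈ Φ.carrier) {σ : World Φ}
    {X : Node Φ} {rest : List (Node Φ)} (hσ : σ.1 = X :: rest) :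
    (canonicalSat Φ).frc σ C ↔ C ∈ X.set := by
  set S := canonicalSat Φ
  induction C generalizing σ X rest with
  | var n => simp [S, canonicalSat, GRFrame.satOf, GRFrame.Forces, hσ]
  | falsum => exact ⟨fun h => (S.frc_falsum σ h).elim, fun h => (Node.falsum_not_mem h).elim⟩
  | neg C ih => rw [S.frc_neg, ih (Φ.of_neg_mem hC) hσ, Node.neg_mem_iff hC]
  | or C D ihC ihD =>
    rw [S.frc_or, ihC (Φ.of_or_mem hC).1 hσ, ihD (Φ.of_or_mem hC).2 hσ, Node.or_mem_iff hC]
  | box C ih =>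
    rw [S.frc_box]
    refine ⟨fun h => by_contra fun hn => ?_, fun h τ hστ => ?_⟩
    · obtain ⟨τ, Y, t, hτ, hστ, hY⟩ := World.exists_lt_not_mem hσ hC hn
      exact hY ((ih (Φ.of_box_mem hC) hτ).1 (h τ hστ))
    · obtain ⟨Z, t, hτ, hZ⟩ := hστ.mem_of_box_mem hσ h
      exact (ih (Φ.of_box_mem hC) hτ).2 hZ
  | bb C ih =>
    rw [S.frc_bb]
    refine ⟨fun h => by_contra fun hn => ?_, fun h τ hστ => ?_⟩
    · obtain ⟨τ, Y, t, hτ, hστ, hY⟩ := World.exists_prec_not_mem hσ hC hn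
      exact hY ((ih (Φ.mem_of_bb_mem hC) hτ).1 (h τ hστ))
    · obtain ⟨Z, t, hτ, hZ⟩ := hστ.mem_of_bb_mem hσ h
      exact (ih (Φ.mem_of_bb_mem hC) hτ).2 hZ

theorem GRbullet.exists_countermodel {A : Formula} (h : ¬ GRbullet A) :
    ∃ F : GRFrame, F.NonTrivial ∧ Finite F.W ∧ ¬ ValidOn F A.box := by
  let Φ := AdequateSet.ofFormula A
  obtain ⟨X, hX⟩ := Node.exists_not_derives (Φ := Φ) h
  let root : World Φ := ⟨[], .nil⟩
  let σ : World Φ := ⟨[X], List.isChain_singleton _⟩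
  have hroot (τ : World Φ) (hτ : τ ≠ root) : root.Lt τ :=
    ⟨List.nil_suffix, List.length_pos_iff.2 fun h => hτ (Subtype.ext h)⟩
  have hσ : root ≠ σ := fun h => List.cons_ne_nil _ _ (congrArg Subtype.val h).symm
  refine ⟨canonicalFrame Φ, ⟨root, σ, hroot, hσ⟩, inferInstanceAs (Finite (World Φ)),
    fun hvalid => hX (Node.derives_of_mem ?_)⟩
  exact (canonicalSat_frc_iff (AdequateSet.mem_ofFormula A) rfl).1
    (((canonicalSat Φ).frc_box root A).1 (hvalid _ root) σ (hroot σ hσ.symm))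

theorem GR.toGRbullet {A : Formula} (h : GR A) : GRbullet A := by
  induction h with
  | taut h => exact .taut h
  | k => exact .k
  | loeb => exact .loeb
  | bbBox => exact .bbBox
  | boxBb => exact .boxBb
  | ros => exact .ros
  | diaBb => exact .diaBb
  | mp _ _ ih₁ ih₂ => exact ih₁.mp ih₂
  | nec _ ih => exact ih.nec
  | boxElim _ ih =>
    by_contra hA
    obtain ⟨F, hF, -, hnot⟩ := GRbullet.exists_countermodel hA
    exact hnot (ih.validOn hF.serial)

/-- `GR• ⊢ A` iff `GR ⊢ A` iff `A` is valid on all non-trivial `GR°`-frames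
iff `A` is valid on all `■`-serial `GR°`-frames; moreover `GR` has the finite
frame property with respect to non-trivial `GR°`-frames. -/
theorem GR_ffp (A : Formula) :
    (GRbullet A ↔ GR A) ∧
    (GR A ↔ ∀ F : GRFrame, F.NonTrivial → ValidOn F A) ∧
    (GR A ↔ ∀ F : GRFrame, F.Serial → ValidOn F A) ∧
    (GR A ↔ ∀ F : GRFrame, F.NonTrivial → Finite F.W → ValidOn F A) := by
  have sound (h : GR A) (F : GRFrame) (hF : F.Serial) : ValidOn F A := h.toGRbullet.validOn hF
  have complete (h : ∀ F : GRFrame, F.NonTrivial → Finite F.W → ValidOn F A) : GR A := by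
    by_contra hA
    obtain ⟨F, hF, hfin, hnot⟩ := GRbullet.exists_countermodel (mt GRbullet.toGR hA)
    exact hnot (h F hF hfin).box
  exact ⟨⟨GRbullet.toGR, GR.toGRbullet⟩,
    ⟨fun h F hF => sound h F hF.serial, fun h => complete fun F hF _ => h F hF⟩,
    ⟨sound, fun h => complete fun F hF _ => h F hF.serial⟩,
    ⟨fun h F hF _ => sound h F hF.serial, complete⟩⟩
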